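/- The greatest lower bound z = p ∧ q in the majorization order, defined by z_1 = min(p_1,q_1) and z_i = min(∑_{j=1}^i p_j, ∑_{j=1}^i q_j) − ∑_{j=1}^{i-1} z_j, is indeed a probability vector sorted in non-increasing order, is majorized by both p and q, and any vector majorized by both p and q is majorized by z. -/

import Mathlib

open Finset

/-- Majorization via prefix sums (vectors as functions ℕ → ℝ, padded with zeros). -/
def Maj (p q : ℕ → ℝ) : Prop :=
  ∀ i : ℕ, ∑ k ∈ Finset.range i, p k ≤ ∑ k ∈ Finset.range i, q k

/-- A probability vector of length `n`, sorted non-increasingly, zero beyond `n`. -/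
def IsProbVec (n : ℕ) (p : ℕ → ℝ) : Prop :=
  (∀ i, 0 ≤ p i) ∧ (∀ i j : ℕ, i ≤ j → p j ≤ p i) ∧
  (∑ k ∈ Finset.range n, p k = 1) ∧ (∀ i, n ≤ i → p i = 0)

/-- The greatest lower bound `p ∧ q` in the majorization lattice. -/
noncomputable def meet (p q : ℕ → ℝ) : ℕ → ℝ := fun i =>
  min (∑ k ∈ Finset.range (i + 1), p k) (∑ k ∈ Finset.range (i + 1), q k) -
  min (∑ k ∈ Finset.range i, p k) (∑ k ∈ Finset.range i, q k)

/-- Shannon entropy (base 2) of the first `n` components. -/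
noncomputable def H2 (n : ℕ) (p : ℕ → ℝ) : ℝ :=
  ∑ k ∈ Finset.range n, -(p k * Real.logb 2 (p k))

/-- Shannon entropy (base 2) of the entries of an `n × m` matrix. -/
noncomputable def Hmat (n m : ℕ) (M : ℕ → ℕ → ℝ) : ℝ :=
  ∑ i ∈ Finset.range n, ∑ j ∈ Finset.range m, -(M i j * Real.logb 2 (M i j))

/-- `M` is a coupling of `p` and `q`: nonnegative, row sums `p`, column sums `q`. -/
def IsCoupling (n m : ℕ) (p q : ℕ → ℝ) (M : ℕ → ℕ → ℝ) : Prop :=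
  (∀ i j, 0 ≤ M i j) ∧ (∀ i < n, ∑ j ∈ Finset.range m, M i j = p i) ∧
  (∀ j < m, ∑ i ∈ Finset.range n, M i j = q j)

/-- The `half` operator: duplicates and halves each component. -/
noncomputable def half (p : ℕ → ℝ) : ℕ → ℝ := fun i => p (i / 2) / 2

/-- Iterated `half` operator. -/
noncomputable def halfIter : ℕ → (ℕ → ℝ) → (ℕ → ℝ)
  | 0, p => p
  | (i + 1), p => half (halfIter i p)

/-- Iterated majorization meet of `p 0, p 1, …, p k`. -/
noncomputable def bigMeet (p : ℕ → ℕ → ℝ) : ℕ → (ℕ → ℝ)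
  | 0 => p 0
  | (k + 1) => meet (bigMeet p k) (p (k + 1))

/-! The prefix sums of `meet p q` telescope to the pointwise minimum of the prefix sums of
`p` and `q`, which gives the three majorization claims at once. A vector is non-increasing
exactly when its prefix sums are concave, and a minimum of concave sequences is concave, so
`meet p q` is again sorted; it sums to `min 1 1 = 1` and vanishes where both prefix sums
have reached `1`. -/

lemma sum_range_meet (p q : ℕ → ℝ) (i : ℕ) :
    ∑ k ∈ range i, meet p q k = min (∑ k ∈ range i, p k) (∑ k ∈ range i, q k) := by
  induction i with
  | zero => simp
  | succ i ih => rw [sum_range_succ, ih, meet]; ring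

lemma maj_meet_left (p q : ℕ → ℝ) : Maj (meet p q) p :=
  fun i => (sum_range_meet p q i).trans_le (min_le_left _ _)

lemma maj_meet_right (p q : ℕ → ℝ) : Maj (meet p q) q :=
  fun i => (sum_range_meet p q i).trans_le (min_le_right _ _)

lemma maj_meet_of_maj {x p q : ℕ → ℝ} (hp : Maj x p) (hq : Maj x q) : Maj x (meet p q) :=
  fun i => (le_min (hp i) (hq i)).trans_eq (sum_range_meet p q i).symm

lemma meet_nonneg {p q : ℕ → ℝ} (hp : ∀ i, 0 ≤ p i) (hq : ∀ i, 0 ≤ q i) (i : ℕ) :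
    0 ≤ meet p q i :=
  sub_nonneg.2 <| min_le_min
    (sum_range_succ p i ▸ le_add_of_nonneg_right (hp i))
    (sum_range_succ q i ▸ le_add_of_nonneg_right (hq i))

lemma min_sub_min_le_min_sub_min {a₀ a₁ a₂ b₀ b₁ b₂ : ℝ}
    (ha : a₂ - a₁ ≤ a₁ - a₀) (hb : b₂ - b₁ ≤ b₁ - b₀) :
    min a₂ b₂ - min a₁ b₁ ≤ min a₁ b₁ - min a₀ b₀ := by
  simp only [min_def]; split_ifs <;> linarith

lemma meet_succ_le {p q : ℕ → ℝ} (hp : Antitone p) (hq : Antitone q) (i : ℕ) :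
    meet p q (i + 1) ≤ meet p q i := by
  apply min_sub_min_le_min_sub_min <;>
    simp only [sum_range_succ, add_sub_cancel_left]
  exacts [hp i.le_succ, hq i.le_succ]

lemma meet_antitone {p q : ℕ → ℝ} (hp : Antitone p) (hq : Antitone q) :
    Antitone (meet p q) :=
  antitone_nat_of_succ_le (meet_succ_le hp hq)

lemma IsProbVec.sum_range_of_le {n : ℕ} {p : ℕ → ℝ} (hp : IsProbVec n p) {i : ℕ}
    (hi : n ≤ i) : ∑ k ∈ range i, p k = 1 :=
  (eventually_constant_sum hp.2.2.2 hi).trans hp.2.2.1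

lemma isProbVec_meet {n : ℕ} {p q : ℕ → ℝ} (hp : IsProbVec n p) (hq : IsProbVec n q) :
    IsProbVec n (meet p q) := by
  refine ⟨meet_nonneg hp.1 hq.1, fun _ _ h => meet_antitone hp.2.1 hq.2.1 h, ?_, fun i hi => ?_⟩
  · rw [sum_range_meet, hp.2.2.1, hq.2.2.1, min_self]
  · have hi' : n ≤ i + 1 := hi.trans i.le_succ
    rw [meet, hp.sum_range_of_le hi, hq.sum_range_of_le hi, hp.sum_range_of_le hi',
      hq.sum_range_of_le hi', sub_self]

theorem stmt3 (n : ℕ) (p q : ℕ → ℝ) (hp : IsProbVec n p) (hq : IsProbVec n q) :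
    IsProbVec n (meet p q) ∧ Maj (meet p q) p ∧ Maj (meet p q) q ∧
    ∀ x : ℕ → ℝ, IsProbVec n x → Maj x p → Maj x q → Maj x (meet p q) :=
  ⟨isProbVec_meet hp hq, maj_meet_left p q, maj_meet_right p q, fun _ _ => maj_meet_of_maj⟩
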